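/- arXiv:1501.03896 — 5 statements merged into one kernel-verified Lean document; each statement's English description precedes it below -/
import Mathlib

section
/- Let d ≥ 2 be an integer. The Doi–Edwards orientation map 𝒮 is differentiable at every nonzero real d×d matrix G, and there exists a constant 𝒮′_∞ ≥ 0 such that for every nonzero real d×d matrix G one has |G| · ‖D𝒮(G)‖ ≤ 𝒮′_∞, where |G| is the Frobenius norm of G and ‖D𝒮(G)‖ is the operator norm of the Fréchet derivative of 𝒮 at G. (Part (4.1b) of Proposition 4.1.) -/
/-!
Write `N(G) = ∫ |Gu|⁻¹ (Gu)(Gu)ᵀ dσ(u)` and `D(G) = ∫ |Gu| dσ(u)`, so that `𝒮 = N / D` up to an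
additive constant. Both integrands are Lipschitz, vanish at `0` and are `C¹` away from `0`; since
`ker G` is a proper subspace when `G ≠ 0`, `Gu ≠ 0` for almost every `u`, and dominated
differentiation makes `N` and `D` Lipschitz and differentiable at every `G ≠ 0`. `D` is positively
homogeneous and positive off `0`, so compactness of the unit sphere gives `D(G) ≥ m |G|`. The
quotient `N / D` is then Lipschitz near `G` with constant `O(1 / |G|)`, which bounds
`|G| ‖D𝒮(G)‖`.
-/

open MeasureTheory Metric

noncomputable section

attribute [local instance] Matrix.frobeniusSeminormedAddCommGroup
  Matrix.frobeniusNormedAddCommGroup Matrix.frobeniusNormedSpace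

/-- The surface measure on the unit sphere `𝕊^{d-1} ⊂ ℝ^d`. -/
def sphereSurf (d : ℕ) : Measure (sphere (0 : EuclideanSpace ℝ (Fin d)) 1) :=
  (volume : Measure (EuclideanSpace ℝ (Fin d))).toSphere

/-- Euclidean norm of a vector in `ℝ^d`. -/
def euclNorm {d : ℕ} (v : Fin d → ℝ) : ℝ := Real.sqrt (∑ i, v i ^ 2)

/-- The Doi–Edwards orientation tensor `𝒮(G)`. -/
def DES (d : ℕ) (G : Matrix (Fin d) (Fin d) ℝ) : Matrix (Fin d) (Fin d) ℝ :=
  fun k l =>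
    (∫ u : sphere (0 : EuclideanSpace ℝ (Fin d)) 1,
        G.mulVec u k * G.mulVec u l / euclNorm (G.mulVec u) ∂ sphereSurf d) /
      (∫ u : sphere (0 : EuclideanSpace ℝ (Fin d)) 1,
        euclNorm (G.mulVec u) ∂ sphereSurf d)
    - (if k = l then 1 / d else 0)

open scoped NNReal Pointwise Topology

namespace DoiEdwards

section Normed

variable {E F : Type*} [NormedAddCommGroup E] [NormedSpace ℝ E]
  [NormedAddCommGroup F] [NormedSpace ℝ F]

theorem norm_inv_norm_smul_apply_self_le (B : E →L[ℝ] E →L[ℝ] F) (x : E) :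
    ‖‖x‖⁻¹ • B x x‖ ≤ ‖B‖ * ‖x‖ := by
  rcases eq_or_ne x 0 with rfl | hx
  · simp
  rw [norm_smul, norm_inv, norm_norm, inv_mul_le_iff₀ (norm_pos_iff.2 hx)]
  calc ‖B x x‖ ≤ ‖B‖ * ‖x‖ * ‖x‖ := B.le_opNorm₂ x x
    _ = ‖x‖ * (‖B‖ * ‖x‖) := by ring

theorem lipschitzWith_inv_norm_smul_apply_self (B : E →L[ℝ] E →L[ℝ] F) :
    LipschitzWith (3 * ‖B‖₊) fun x => ‖x‖⁻¹ • B x x := by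
  refine LipschitzWith.of_dist_le_mul fun x y => ?_
  simp only [dist_eq_norm, NNReal.coe_mul, coe_nnnorm, NNReal.coe_ofNat]
  wlog hxy : ‖x‖ ≤ ‖y‖ generalizing x y
  · rw [norm_sub_rev, norm_sub_rev x]
    exact this y x (le_of_not_ge hxy)
  have hB := norm_nonneg B
  rcases eq_or_ne x 0 with rfl | hx
  · rw [norm_zero, inv_zero, zero_smul, zero_sub, zero_sub, norm_neg, norm_neg]
    nlinarith [norm_inv_norm_smul_apply_self_le B y, mul_nonneg hB (norm_nonneg y)]
  have hx' : 0 < ‖x‖ := norm_pos_iff.2 hx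
  have hy' : 0 < ‖y‖ := hx'.trans_le hxy
  have hgap : ‖y‖ - ‖x‖ ≤ ‖x - y‖ := by
    rw [norm_sub_rev]; exact norm_sub_norm_le y x
  have hsplit : ‖x‖⁻¹ • B x x - ‖y‖⁻¹ • B y y
      = ‖y‖⁻¹ • (B x (x - y) + B (x - y) y) + (‖x‖⁻¹ - ‖y‖⁻¹) • B x x := by
    simp only [map_sub, sub_apply, smul_add, smul_sub, sub_smul]
    abel
  have h₁ : ‖‖y‖⁻¹ • (B x (x - y) + B (x - y) y)‖ ≤ 2 * ‖B‖ * ‖x - y‖ := by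
    rw [norm_smul, norm_inv, norm_norm, inv_mul_le_iff₀ hy']
    calc ‖B x (x - y) + B (x - y) y‖ ≤ ‖B‖ * ‖x‖ * ‖x - y‖ + ‖B‖ * ‖x - y‖ * ‖y‖ :=
          (norm_add_le _ _).trans (add_le_add (B.le_opNorm₂ _ _) (B.le_opNorm₂ _ _))
      _ ≤ ‖y‖ * (2 * ‖B‖ * ‖x - y‖) := by
            nlinarith [mul_le_mul_of_nonneg_right (mul_le_mul_of_nonneg_left hxy hB)
              (norm_nonneg (x - y))]
  have h₂ : ‖(‖x‖⁻¹ - ‖y‖⁻¹) • B x x‖ ≤ ‖B‖ * ‖x - y‖ := by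
    have hinv : 0 ≤ ‖x‖⁻¹ - ‖y‖⁻¹ := sub_nonneg.2 (inv_anti₀ hx' hxy)
    rw [norm_smul, Real.norm_of_nonneg hinv]
    calc (‖x‖⁻¹ - ‖y‖⁻¹) * ‖B x x‖ ≤ (‖x‖⁻¹ - ‖y‖⁻¹) * (‖B‖ * ‖x‖ * ‖x‖) := by
          gcongr; exact B.le_opNorm₂ x x
      _ = ‖B‖ * (‖y‖ - ‖x‖) * (‖x‖ / ‖y‖) := by field_simp
      _ ≤ ‖B‖ * ‖x - y‖ * 1 := by
          gcongr; exact (div_le_one hy').2 hxy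
      _ = ‖B‖ * ‖x - y‖ := mul_one _
  rw [hsplit]
  linarith [norm_add_le (‖y‖⁻¹ • (B x (x - y) + B (x - y) y)) ((‖x‖⁻¹ - ‖y‖⁻¹) • B x x)]

end Normed

theorem contDiffOn_inv_norm_smul_apply_self {E F : Type*} [NormedAddCommGroup E]
    [InnerProductSpace ℝ E] [NormedAddCommGroup F] [NormedSpace ℝ F]
    (B : E →L[ℝ] E →L[ℝ] F) {n : WithTop ℕ∞} :
    ContDiffOn ℝ n (fun x => ‖x‖⁻¹ • B x x) {0}ᶜ := fun _ hx =>
  (((contDiffAt_norm ℝ hx).inv (norm_ne_zero_iff.2 hx)).smul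
    (B.isBoundedBilinearMap.contDiff.comp (contDiff_id.prodMk contDiff_id)).contDiffAt
    ).contDiffWithinAt

section Quotient

variable {V F : Type*} [NormedAddCommGroup V] [NormedAddCommGroup F] [NormedSpace ℝ F]
  {N : V → F} {D : V → ℝ} {K K' : ℝ≥0} {m : ℝ}

theorem norm_inv_smul_sub_inv_smul_le (hN : LipschitzWith K N) (hN0 : N 0 = 0)
    (hD : LipschitzWith K' D) (hD0 : D 0 = 0) (hm : 0 < m) (hDm : ∀ x, m * ‖x‖ ≤ D x)
    {x y : V} (hx : x ≠ 0) (hy : ‖y - x‖ ≤ ‖x‖ / 2) :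
    ‖(D y)⁻¹ • N y - (D x)⁻¹ • N x‖ ≤ 4 * K * K' / (m ^ 2 * ‖x‖) * ‖y - x‖ := by
  have hx' : 0 < ‖x‖ := norm_pos_iff.2 hx
  have hyx : ‖x‖ / 2 ≤ ‖y‖ := by linarith [norm_sub_norm_le x y, norm_sub_rev x y]
  have hDx : m * ‖x‖ ≤ D x := hDm x
  have hDy : m * (‖x‖ / 2) ≤ D y := (mul_le_mul_of_nonneg_left hyx hm.le).trans (hDm y)
  have hDx' : 0 < D x := lt_of_lt_of_le (by positivity) hDx
  have hDy' : 0 < D y := lt_of_lt_of_le (by positivity) hDy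
  have hNx : ‖N x‖ ≤ K * ‖x‖ := by simpa [hN0] using hN.norm_sub_le x 0
  have hDxK : D x ≤ K' * ‖x‖ := by
    simpa [hD0, abs_of_pos hDx'] using hD.norm_sub_le x 0
  have hsplit : (D y)⁻¹ • N y - (D x)⁻¹ • N x
      = (D y * D x)⁻¹ • (D x • (N y - N x) - (D y - D x) • N x) := by
    have e₁ : (D y * D x)⁻¹ * D x = (D y)⁻¹ := by field_simp
    have e₂ : (D y * D x)⁻¹ * (D y - D x) = (D x)⁻¹ - (D y)⁻¹ := by field_simp
    rw [smul_sub, smul_smul, smul_smul, e₁, e₂, smul_sub, sub_smul]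
    abel
  have hnum : ‖D x • (N y - N x) - (D y - D x) • N x‖ ≤ 2 * K * K' * ‖x‖ * ‖y - x‖ := by
    calc ‖D x • (N y - N x) - (D y - D x) • N x‖
        ≤ D x * (K * ‖y - x‖) + (K' * ‖y - x‖) * (K * ‖x‖) := by
          refine (norm_sub_le _ _).trans (add_le_add ?_ ?_) <;> rw [norm_smul]
          · rw [Real.norm_of_nonneg hDx'.le]; gcongr; exact hN.norm_sub_le y x
          · gcongr; exact hD.norm_sub_le y x
      _ ≤ (K' * ‖x‖) * (K * ‖y - x‖) + (K' * ‖y - x‖) * (K * ‖x‖) := by gcongr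
      _ = 2 * K * K' * ‖x‖ * ‖y - x‖ := by ring
  have hden : m ^ 2 * ‖x‖ ^ 2 / 2 ≤ D y * D x := by
    calc m ^ 2 * ‖x‖ ^ 2 / 2 = m * (‖x‖ / 2) * (m * ‖x‖) := by ring
      _ ≤ D y * D x := mul_le_mul hDy hDx (by positivity) hDy'.le
  rw [hsplit, norm_smul, norm_inv, Real.norm_of_nonneg (by positivity),
    inv_mul_le_iff₀ (by positivity)]
  calc ‖D x • (N y - N x) - (D y - D x) • N x‖ ≤ 2 * K * K' * ‖x‖ * ‖y - x‖ := hnum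
    _ = m ^ 2 * ‖x‖ ^ 2 / 2 * (4 * K * K' / (m ^ 2 * ‖x‖) * ‖y - x‖) := by field_simp; ring
    _ ≤ D y * D x * (4 * K * K' / (m ^ 2 * ‖x‖) * ‖y - x‖) := by gcongr

theorem norm_mul_norm_fderiv_inv_smul_le [NormedSpace ℝ V] (hN : LipschitzWith K N)
    (hN0 : N 0 = 0) (hD : LipschitzWith K' D) (hD0 : D 0 = 0) (hm : 0 < m)
    (hDm : ∀ x, m * ‖x‖ ≤ D x) (x : V) :
    ‖x‖ * ‖fderiv ℝ (fun y => (D y)⁻¹ • N y) x‖ ≤ 4 * K * K' / m ^ 2 := by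
  rcases eq_or_ne x 0 with rfl | hx
  · simp only [norm_zero, zero_mul]; positivity
  have hx' : 0 < ‖x‖ := norm_pos_iff.2 hx
  have hlip : ∀ᶠ y in 𝓝 x, ‖(D y)⁻¹ • N y - (D x)⁻¹ • N x‖
      ≤ 4 * K * K' / (m ^ 2 * ‖x‖) * ‖y - x‖ := by
    filter_upwards [closedBall_mem_nhds x (half_pos hx')] with y hy
    exact norm_inv_smul_sub_inv_smul_le hN hN0 hD hD0 hm hDm hx (mem_closedBall_iff_norm.1 hy)
  calc ‖x‖ * ‖fderiv ℝ (fun y => (D y)⁻¹ • N y) x‖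
      ≤ ‖x‖ * (4 * K * K' / (m ^ 2 * ‖x‖)) := by
        gcongr; exact norm_fderiv_le_of_lip' ℝ (by positivity) hlip
    _ = 4 * K * K' / m ^ 2 := by field_simp

end Quotient

theorem exists_pos_mul_norm_le {V : Type*} [NormedAddCommGroup V] [NormedSpace ℝ V]
    [FiniteDimensional ℝ V] {D : V → ℝ} (hD : Continuous D)
    (hsmul : ∀ (c : ℝ) x, 0 ≤ c → D (c • x) = c * D x) (hpos : ∀ x ≠ 0, 0 < D x) :
    ∃ m > 0, ∀ x, m * ‖x‖ ≤ D x := by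
  have hD0 : D 0 = 0 := by simpa using hsmul 0 0 le_rfl
  rcases subsingleton_or_nontrivial V with hV | hV
  · exact ⟨1, one_pos, fun x => by simp [Subsingleton.elim x 0, hD0]⟩
  obtain ⟨x₀, hx₀, hmin⟩ := (isCompact_sphere (0 : V) 1).exists_isMinOn
    (NormedSpace.sphere_nonempty.2 zero_le_one) hD.continuousOn
  have hx₀' : x₀ ≠ 0 := ne_zero_of_mem_unit_sphere ⟨x₀, hx₀⟩
  refine ⟨D x₀, hpos x₀ hx₀', fun x => ?_⟩
  rcases eq_or_ne x 0 with rfl | hx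
  · simp [hD0]
  have hx' : 0 < ‖x‖ := norm_pos_iff.2 hx
  have hunit : ‖x‖⁻¹ • x ∈ sphere (0 : V) 1 := by
    rw [mem_sphere_zero_iff_norm, norm_smul, norm_inv, norm_norm, inv_mul_cancel₀ hx'.ne']
  calc D x₀ * ‖x‖ ≤ D (‖x‖⁻¹ • x) * ‖x‖ := by gcongr; exact hmin hunit
    _ = D x := by rw [hsmul _ _ (inv_nonneg.2 hx'.le), mul_comm, ← mul_assoc,
        mul_inv_cancel₀ hx'.ne', one_mul]

section ParametricIntegral

variable {X V E F : Type*} [TopologicalSpace X] [SecondCountableTopology X] [MeasurableSpace X]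
  [OpensMeasurableSpace X] {μ : Measure X} [IsFiniteMeasure μ]
  [NormedAddCommGroup V] [NormedSpace ℝ V] [NormedAddCommGroup E] [NormedSpace ℝ E]
  [NormedAddCommGroup F] {L : X → V →L[ℝ] E} {f : E → F} {K : ℝ≥0}

theorem integrable_comp_apply (hL : Continuous L) (hLc : ∀ u G, ‖L u G‖ ≤ ‖G‖)
    (hf : LipschitzWith K f) (G : V) : Integrable (fun u => f (L u G)) μ := by
  refine (integrable_const (‖f 0‖ + K * ‖G‖)).mono'
    (hf.continuous.comp (hL.clm_apply continuous_const)).aestronglyMeasurable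
    (ae_of_all _ fun u => ?_)
  calc ‖f (L u G)‖ ≤ ‖f 0‖ + ‖f (L u G) - f 0‖ := norm_le_norm_add_norm_sub' _ _
    _ ≤ ‖f 0‖ + K * ‖G‖ := by
      gcongr
      refine (hf.norm_sub_le _ _).trans ?_
      rw [sub_zero]
      gcongr
      exact hLc u G

theorem lipschitzWith_integral_comp_apply [NormedSpace ℝ F] [CompleteSpace F] (hL : Continuous L)
    (hLc : ∀ u G, ‖L u G‖ ≤ ‖G‖) (hf : LipschitzWith K f) :
    LipschitzWith (K * (μ Set.univ).toNNReal) fun G => ∫ u, f (L u G) ∂μ := by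
  refine LipschitzWith.of_dist_le_mul fun G H => ?_
  rw [dist_eq_norm, dist_eq_norm, ← integral_sub (integrable_comp_apply hL hLc hf G)
    (integrable_comp_apply hL hLc hf H)]
  have hpt (u : X) : ‖f (L u G) - f (L u H)‖ ≤ K * ‖G - H‖ := by
    refine (hf.norm_sub_le _ _).trans ?_
    rw [← map_sub]
    gcongr
    exact hLc u _
  refine (norm_integral_le_of_norm_le_const (ae_of_all μ hpt)).trans_eq ?_
  simp only [measureReal_def, NNReal.coe_mul, ENNReal.coe_toNNReal_eq_toReal]
  ring

theorem differentiableAt_integral_comp_apply [NormedSpace ℝ F] [CompleteSpace F] (hL : Continuous L)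
    (hLc : ∀ u G, ‖L u G‖ ≤ ‖G‖) (hf : LipschitzWith K f) (hf' : ContDiffOn ℝ 1 f {0}ᶜ) {G₀ : V}
    (hG₀ : ∀ᵐ u ∂μ, L u G₀ ≠ 0) :
    DifferentiableAt ℝ (fun G => ∫ u, f (L u G) ∂μ) G₀ := by
  set s : Set X := {u | L u G₀ ≠ 0}
  have hs : IsOpen s := isOpen_ne_fun (hL.clm_apply continuous_const) continuous_const
  have hF' : ContinuousOn (fun u => (fderiv ℝ f (L u G₀)).comp (L u)) s :=
    ((hf'.continuousOn_fderiv_of_isOpen isOpen_compl_singleton le_rfl).comp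
      (hL.clm_apply continuous_const).continuousOn fun _ hu => hu).clm_comp hL.continuousOn
  have hF'meas : AEStronglyMeasurable (fun u => (fderiv ℝ f (L u G₀)).comp (L u)) μ := by
    rw [← Measure.restrict_eq_self_of_ae_mem hG₀]
    exact hF'.aestronglyMeasurable hs.measurableSet
  refine (hasFDerivAt_integral_of_dominated_loc_of_lip' (bound := fun _ => K)
    Filter.univ_mem (fun G _ => (integrable_comp_apply hL hLc hf G).aestronglyMeasurable)
    (integrable_comp_apply hL hLc hf G₀) hF'meas (ae_of_all _ fun u G _ => ?_)
    (integrable_const _) ?_).2.differentiableAt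
  · refine (hf.norm_sub_le _ _).trans ?_
    rw [← map_sub]
    gcongr
    exact hLc u _
  · filter_upwards [hG₀] with u hu
    exact ((hf'.contDiffAt (isOpen_compl_singleton.mem_nhds hu)).differentiableAt
      one_ne_zero).hasFDerivAt.comp G₀ (L u).hasFDerivAt

theorem integral_norm_apply_pos (hL : Continuous L) (hLc : ∀ u G, ‖L u G‖ ≤ ‖G‖) (hμ : μ ≠ 0)
    {G : V} (hG : ∀ᵐ u ∂μ, L u G ≠ 0) : 0 < ∫ u, ‖L u G‖ ∂μ := by
  refine (integral_nonneg fun u => norm_nonneg _).lt_of_ne' fun h => hμ ?_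
  rw [integral_eq_zero_iff_of_nonneg (fun u => norm_nonneg _)
    (integrable_comp_apply hL hLc lipschitzWith_one_norm G)] at h
  rw [← ae_eq_bot, ← Filter.eventually_false_iff_eq_bot]
  filter_upwards [h, hG] with u h₀ hne
  exact hne (norm_eq_zero.1 h₀)

end ParametricIntegral

open Matrix WithLp

variable {d : ℕ}

theorem ae_toSphere_notMem_submodule {E : Type*} [NormedAddCommGroup E] [NormedSpace ℝ E]
    [MeasurableSpace E] [BorelSpace E] [FiniteDimensional ℝ E] (μ : Measure E)
    [μ.IsAddHaarMeasure] {W : Submodule ℝ E} (hW : W ≠ ⊤) :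
    ∀ᵐ u : sphere (0 : E) 1 ∂μ.toSphere, (u : E) ∉ W := by
  set s : Set (sphere (0 : E) 1) := {u | (u : E) ∈ W}
  have hs : MeasurableSet s :=
    (W.closed_of_finiteDimensional.preimage continuous_subtype_val).measurableSet
  have hcone : Set.Ioo (0 : ℝ) 1 • (Subtype.val '' s) ⊆ W := by
    rintro _ ⟨r, -, _, ⟨u, hu, rfl⟩, rfl⟩
    exact W.smul_mem r hu
  simp only [ae_iff, not_not]
  rw [μ.toSphere_apply' hs, measure_mono_null hcone (μ.addHaar_submodule W hW), mul_zero]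

theorem norm_toLp_mulVec_le {𝕜 m n : Type*} [RCLike 𝕜] [Fintype m] [Fintype n]
    (G : Matrix m n 𝕜) (v : n → 𝕜) : ‖toLp 2 (G *ᵥ v)‖ ≤ ‖G‖ * ‖toLp 2 v‖ := by
  calc ‖toLp 2 (G *ᵥ v)‖ = ‖G * replicateCol Unit v‖ := by
        rw [← replicateCol_mulVec, frobenius_norm_replicateCol]
    _ ≤ ‖G‖ * ‖replicateCol Unit v‖ := frobenius_norm_mul _ _
    _ = ‖G‖ * ‖toLp 2 v‖ := by rw [frobenius_norm_replicateCol]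

def mulVecBilin (d : ℕ) :
    Matrix (Fin d) (Fin d) ℝ →L[ℝ] EuclideanSpace ℝ (Fin d) →L[ℝ] EuclideanSpace ℝ (Fin d) :=
  LinearMap.toContinuousLinearMap <| LinearMap.toContinuousLinearMap.toLinearMap ∘ₗ
    (toEuclideanLin (m := Fin d) (n := Fin d) (𝕜 := ℝ)).toLinearMap

def vecMulVecBilin (d : ℕ) :
    EuclideanSpace ℝ (Fin d) →L[ℝ] EuclideanSpace ℝ (Fin d) →L[ℝ] Matrix (Fin d) (Fin d) ℝ :=
  LinearMap.toContinuousLinearMap <| LinearMap.toContinuousLinearMap.toLinearMap ∘ₗ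
    LinearMap.mk₂ ℝ (fun x y => vecMulVec (ofLp x) (ofLp y))
      (fun _ _ _ => by simp [add_vecMulVec]) (fun _ _ _ => by simp [smul_vecMulVec])
      (fun _ _ _ => by simp [vecMulVec_add]) (fun _ _ _ => by simp [vecMulVec_smul])

-- No type ascription: written out, `Matrix _ _ ℝ →L[ℝ] _` would carry the product topology on
-- matrices instead of the Frobenius one, and the generic lemmas above would not apply.
def sphereEval (d : ℕ) (u : sphere (0 : EuclideanSpace ℝ (Fin d)) 1) :=
  (mulVecBilin d).flip u

theorem sphereEval_apply (u : sphere (0 : EuclideanSpace ℝ (Fin d)) 1)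
    (G : Matrix (Fin d) (Fin d) ℝ) :
    sphereEval d u G = toLp 2 (G *ᵥ ofLp (u : EuclideanSpace ℝ (Fin d))) :=
  rfl

theorem vecMulVecBilin_apply (x y : EuclideanSpace ℝ (Fin d)) :
    vecMulVecBilin d x y = vecMulVec (ofLp x) (ofLp y) :=
  rfl

theorem continuous_sphereEval : Continuous (sphereEval d) :=
  (mulVecBilin d).flip.continuous.comp continuous_subtype_val

theorem norm_sphereEval_apply_le (u : sphere (0 : EuclideanSpace ℝ (Fin d)) 1)
    (G : Matrix (Fin d) (Fin d) ℝ) : ‖sphereEval d u G‖ ≤ ‖G‖ := by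
  simpa [sphereEval_apply, norm_eq_of_mem_sphere u] using
    norm_toLp_mulVec_le G (ofLp (u : EuclideanSpace ℝ (Fin d)))

theorem ae_sphereEval_ne_zero {G : Matrix (Fin d) (Fin d) ℝ} (hG : G ≠ 0) :
    ∀ᵐ u ∂sphereSurf d, sphereEval d u G ≠ 0 := by
  have hker : LinearMap.ker (mulVecBilin d G).toLinearMap ≠ ⊤ := by
    rw [Ne, LinearMap.ker_eq_top]
    exact fun h => hG (toEuclideanLin.map_eq_zero_iff.1 h)
  exact ae_toSphere_notMem_submodule volume hker

instance : IsFiniteMeasure (sphereSurf d) := by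
  unfold sphereSurf; infer_instance

theorem integral_norm_sphereEval_pos {G : Matrix (Fin d) (Fin d) ℝ} (hG : G ≠ 0) :
    0 < ∫ u, ‖sphereEval d u G‖ ∂sphereSurf d := by
  have : NeZero d := ⟨by rintro rfl; exact hG (Subsingleton.elim _ _)⟩
  exact integral_norm_apply_pos continuous_sphereEval norm_sphereEval_apply_le
    (Measure.toSphere_ne_zero _) (ae_sphereEval_ne_zero hG)

theorem euclNorm_eq_norm (v : Fin d → ℝ) : euclNorm v = ‖toLp 2 v‖ := by
  simp [euclNorm, EuclideanSpace.norm_eq]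

-- Both integrals vanish at `G = 0`, so `DES d 0` is exactly the constant subtracted in `DES`.
theorem DES_eq (d : ℕ) : DES d = fun G =>
    (∫ u, ‖sphereEval d u G‖ ∂sphereSurf d)⁻¹ •
      (∫ u, ‖sphereEval d u G‖⁻¹ • vecMulVecBilin d (sphereEval d u G) (sphereEval d u G)
        ∂sphereSurf d) + DES d 0 := by
  ext G k l
  set F := fun u => ‖sphereEval d u G‖⁻¹ • vecMulVecBilin d (sphereEval d u G) (sphereEval d u G)
  have hF := integrable_comp_apply continuous_sphereEval norm_sphereEval_apply_le
    (lipschitzWith_inv_norm_smul_apply_self (vecMulVecBilin d)) G (μ := sphereSurf d)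
  have hentry : (∫ u, F u ∂sphereSurf d) k l = ∫ u, F u k l ∂sphereSurf d :=
    ((entryLinearMap ℝ ℝ k l).toContinuousLinearMap.integral_comp_comm hF).symm
  rw [Matrix.add_apply, Matrix.smul_apply, hentry, smul_eq_mul]
  unfold DES
  simp [F, euclNorm_eq_norm, sphereEval_apply, vecMulVecBilin_apply, vecMulVec_apply,
    div_eq_inv_mul, sub_eq_add_neg]

end DoiEdwards

open DoiEdwards in
theorem stmt1_general (d : ℕ) :
    (∀ G : Matrix (Fin d) (Fin d) ℝ, G ≠ 0 → DifferentiableAt ℝ (DES d) G) ∧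
    ∃ C : ℝ, 0 ≤ C ∧ ∀ G : Matrix (Fin d) (Fin d) ℝ, G ≠ 0 →
      ‖G‖ * @Norm.norm _ ContinuousLinearMap.hasOpNorm (fderiv ℝ (DES d) G) ≤ C := by
  have hN := lipschitzWith_integral_comp_apply continuous_sphereEval norm_sphereEval_apply_le
    (lipschitzWith_inv_norm_smul_apply_self (vecMulVecBilin d)) (μ := sphereSurf d)
  have hD := lipschitzWith_integral_comp_apply continuous_sphereEval norm_sphereEval_apply_le
    lipschitzWith_one_norm (μ := sphereSurf d)
  obtain ⟨m, hm, hDm⟩ := exists_pos_mul_norm_le hD.continuous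
    (fun c G hc => by simp only [map_smul, norm_smul, Real.norm_of_nonneg hc, integral_const_mul])
    (fun G hG => integral_norm_sphereEval_pos hG)
  rw [DES_eq]
  refine ⟨fun G hG => ?_, ?C, ?nonneg, fun G _ => ?bound⟩
  case bound =>
    rw [fderiv_add_const]
    exact norm_mul_norm_fderiv_inv_smul_le hN (by simp) hD (by simp) hm hDm G
  case nonneg => positivity
  have hDdiff := differentiableAt_integral_comp_apply continuous_sphereEval
    norm_sphereEval_apply_le lipschitzWith_one_norm
    (fun _ hx => (contDiffAt_norm ℝ hx).contDiffWithinAt) (ae_sphereEval_ne_zero hG)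
  have hNdiff := differentiableAt_integral_comp_apply continuous_sphereEval
    norm_sphereEval_apply_le (lipschitzWith_inv_norm_smul_apply_self (vecMulVecBilin d))
    (contDiffOn_inv_norm_smul_apply_self (vecMulVecBilin d)) (ae_sphereEval_ne_zero hG)
  exact ((hDdiff.inv (integral_norm_sphereEval_pos hG).ne').smul hNdiff).add_const _

/-- **(4.1b) of Proposition 4.1.** The Doi–Edwards orientation map `𝒮` is differentiable at
every nonzero real `d × d` matrix, and there is a constant `𝒮′_∞ ≥ 0` such that
`|G| · ‖D𝒮(G)‖ ≤ 𝒮′_∞` for every nonzero `G`, where matrices carry the Frobenius norm and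
`‖D𝒮(G)‖` is the operator norm of the Fréchet derivative. -/
theorem stmt1 (d : ℕ) (hd : 2 ≤ d) :
    (∀ G : Matrix (Fin d) (Fin d) ℝ, G ≠ 0 → DifferentiableAt ℝ (DES d) G) ∧
    ∃ C : ℝ, 0 ≤ C ∧ ∀ G : Matrix (Fin d) (Fin d) ℝ, G ≠ 0 →
      ‖G‖ * @Norm.norm _ ContinuousLinearMap.hasOpNorm (fderiv ℝ (DES d) G) ≤ C :=
  stmt1_general d
end
end

section
/- Let d ≥ 2 be an integer. For every nonzero real d×d matrix G, the map 𝒮 is differentiable at G and its Fréchet derivative satisfies the explicit bound ‖D𝒮(G)‖ ≤ 2(1 + √d) · σ(𝕊^{d−1}) / (∫_{𝕊^{d−1}} |G·u| dσ(u)), where σ(𝕊^{d−1}) is the total surface measure of the unit sphere. (Inequality (4.4) in the proof of Proposition 4.1.) -/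
open MeasureTheory Metric

noncomputable section

attribute [local instance] Matrix.frobeniusSeminormedAddCommGroup
  Matrix.frobeniusNormedAddCommGroup Matrix.frobeniusNormedSpace

/-!
Write `𝒮(M) = N(M) / D(M) - δ/d` with `N(M) = ∫ φ(M u) dσ`, `φ(w) = w wᵀ / |w|`, and
`D(M) = ∫ |M u| dσ`. For a unit vector `u` the maps `M ↦ φ(M u)` and `M ↦ |M u|` are `3`- and
`1`-Lipschitz for the Frobenius norm, and they are differentiable at `G` unless `G u = 0`, which
only happens on the trace of the proper subspace `ker G`, a `σ`-null set. Differentiation under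
the integral sign therefore gives derivatives of `N` and `D` at `G` of norms at most `3 σ(𝕊)` and
`σ(𝕊)`. Since `|N(G)| ≤ D(G)`, the quotient rule bounds `‖D𝒮(G)‖` by
`4 σ(𝕊) / D(G) ≤ 2 (1 + √d) σ(𝕊) / D(G)`.
-/

open Matrix WithLp NNReal

section FrobeniusBounds

variable {m n α : Type*} [Fintype m] [Fintype n] [RCLike α]

theorem Matrix.frobenius_norm_mulVec_le (M : Matrix m n α) (v : n → α) :
    ‖toLp 2 (M *ᵥ v)‖ ≤ ‖M‖ * ‖toLp 2 v‖ := by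
  simpa [← replicateCol_mulVec] using frobenius_norm_mul M (replicateCol Unit v)

theorem Matrix.frobenius_norm_vecMulVec_le (v : m → α) (w : n → α) :
    ‖vecMulVec v w‖ ≤ ‖toLp 2 v‖ * ‖toLp 2 w‖ := by
  simpa [vecMulVec_eq Unit] using frobenius_norm_mul (replicateCol Unit v) (replicateRow Unit w)

end FrobeniusBounds

section EuclideanMatrix

variable {m n : Type*} [Fintype m] [Fintype n]

def Matrix.mulVecCLM (v : EuclideanSpace ℝ n) : Matrix m n ℝ →L[ℝ] EuclideanSpace ℝ m :=
  LinearMap.mkContinuous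
    { toFun := fun M => toLp 2 (M *ᵥ v)
      map_add' := fun M N => by simp [add_mulVec]
      map_smul' := fun c M => by simp [smul_mulVec] }
    ‖v‖ fun M => by simpa [mul_comm] using frobenius_norm_mulVec_le M v

@[simp]
theorem Matrix.mulVecCLM_apply (v : EuclideanSpace ℝ n) (M : Matrix m n ℝ) :
    mulVecCLM v M = toLp 2 (M *ᵥ v) := rfl

theorem Matrix.lipschitzWith_mulVecCLM {v : EuclideanSpace ℝ n} (hv : ‖v‖ = 1) :
    LipschitzWith 1 (mulVecCLM v : Matrix m n ℝ → EuclideanSpace ℝ m) := by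
  simpa using AddMonoidHomClass.lipschitz_of_bound (mulVecCLM v) 1 fun M => by
    simpa [hv] using frobenius_norm_mulVec_le M v

def Matrix.vecMulVecCLM : EuclideanSpace ℝ m →L[ℝ] EuclideanSpace ℝ n →L[ℝ] Matrix m n ℝ :=
  LinearMap.mkContinuous₂
    (LinearMap.mk₂ ℝ (fun v w => vecMulVec v w) (fun _ _ _ => by simp [add_vecMulVec])
      (fun _ _ _ => by simp [smul_vecMulVec]) (fun _ _ _ => by simp [vecMulVec_add])
      (fun _ _ _ => by simp [vecMulVec_smul]))
    1 fun v w => by simpa using frobenius_norm_vecMulVec_le v w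

theorem EuclideanSpace.norm_vecMulVec_le (v : EuclideanSpace ℝ m) (w : EuclideanSpace ℝ n) :
    ‖vecMulVec v w‖ ≤ ‖v‖ * ‖w‖ := by
  simpa using frobenius_norm_vecMulVec_le (ofLp v) (ofLp w)

end EuclideanMatrix

section OuterDivNorm

variable {n : Type*} [Fintype n]

def outerDivNorm (w : EuclideanSpace ℝ n) : Matrix n n ℝ := ‖w‖⁻¹ • vecMulVec w w

theorem norm_outerDivNorm_le (w : EuclideanSpace ℝ n) : ‖outerDivNorm w‖ ≤ ‖w‖ := by
  rcases eq_or_ne w 0 with rfl | hw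
  · simp [outerDivNorm]
  calc ‖outerDivNorm w‖ ≤ ‖w‖⁻¹ * (‖w‖ * ‖w‖) := by
        rw [outerDivNorm, norm_smul, norm_inv, norm_norm]
        gcongr
        exact EuclideanSpace.norm_vecMulVec_le w w
    _ = ‖w‖ := by field_simp

theorem norm_outerDivNorm_sub_le_of_norm_le {a b : EuclideanSpace ℝ n} (hba : ‖b‖ ≤ ‖a‖) :
    ‖outerDivNorm a - outerDivNorm b‖ ≤ 3 * ‖a - b‖ := by
  rcases eq_or_ne b 0 with rfl | hb
  · simpa [outerDivNorm] using (norm_outerDivNorm_le a).trans (by linarith [norm_nonneg a])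
  have hb₀ : 0 < ‖b‖ := norm_pos_iff.2 hb
  have ha₀ : 0 < ‖a‖ := hb₀.trans_le hba
  have hsplit : outerDivNorm a - outerDivNorm b =
      ‖a‖⁻¹ • (vecMulVec (a - b) a + vecMulVec b (a - b)) + (‖a‖⁻¹ - ‖b‖⁻¹) • vecMulVec b b := by
    simp only [outerDivNorm, ofLp_sub, sub_vecMulVec, vecMulVec_sub, smul_add, smul_sub, sub_smul]
    abel
  have hinv : ‖‖a‖⁻¹ - ‖b‖⁻¹‖ ≤ ‖a - b‖ / (‖a‖ * ‖b‖) := by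
    rw [inv_sub_inv ha₀.ne' hb₀.ne', norm_div, Real.norm_eq_abs, Real.norm_eq_abs,
      abs_of_pos (by positivity : 0 < ‖a‖ * ‖b‖), abs_sub_comm]
    gcongr
    exact abs_norm_sub_norm_le a b
  calc ‖outerDivNorm a - outerDivNorm b‖
      ≤ ‖a‖⁻¹ * (‖a - b‖ * ‖a‖ + ‖b‖ * ‖a - b‖) + ‖a - b‖ / (‖a‖ * ‖b‖) * (‖b‖ * ‖b‖) := by
        rw [hsplit]
        refine (norm_add_le _ _).trans (add_le_add ?_ ?_) <;> rw [norm_smul]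
        · rw [norm_inv, norm_norm]
          gcongr
          exact (norm_add_le _ _).trans (add_le_add (EuclideanSpace.norm_vecMulVec_le _ _)
            (EuclideanSpace.norm_vecMulVec_le _ _))
        · exact mul_le_mul hinv (EuclideanSpace.norm_vecMulVec_le b b) (norm_nonneg _)
            (by positivity)
    _ = ‖a - b‖ * (1 + 2 * (‖b‖ / ‖a‖)) := by field_simp; ring
    _ ≤ 3 * ‖a - b‖ := by
        have : ‖b‖ / ‖a‖ ≤ 1 := (div_le_one ha₀).2 hba
        nlinarith [norm_nonneg (a - b)]

theorem lipschitzWith_outerDivNorm :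
    LipschitzWith 3 (outerDivNorm : EuclideanSpace ℝ n → Matrix n n ℝ) := by
  refine LipschitzWith.of_dist_le_mul fun a b => ?_
  simp only [dist_eq_norm, NNReal.coe_ofNat]
  rcases le_total ‖b‖ ‖a‖ with h | h
  · exact norm_outerDivNorm_sub_le_of_norm_le h
  · rw [norm_sub_rev, norm_sub_rev a]
    exact norm_outerDivNorm_sub_le_of_norm_le h

theorem differentiableAt_outerDivNorm {w : EuclideanSpace ℝ n} (hw : w ≠ 0) :
    DifferentiableAt ℝ outerDivNorm w := by
  have h : DifferentiableAt ℝ (fun v : EuclideanSpace ℝ n => vecMulVecCLM v v) w :=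
    vecMulVecCLM.differentiableAt.clm_apply differentiableAt_id
  exact ((differentiableAt_id.norm ℝ hw).inv (norm_ne_zero_iff.2 hw)).smul h

end OuterDivNorm

section ParametricIntegral

variable {α E V : Type*} [MeasurableSpace α] {μ : Measure α} [NormedAddCommGroup E]
  [NormedAddCommGroup V] {F : α → E → V}

theorem integrable_apply_of_continuous_uncurry [TopologicalSpace α] [CompactSpace α]
    [OpensMeasurableSpace α] [IsFiniteMeasure μ] (hF : Continuous F.uncurry) (x : E) :
    Integrable (fun u => F u x) μ :=
  (hF.uncurry_right x).integrable_of_hasCompactSupport (HasCompactSupport.of_compactSpace _)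

theorem hasFDerivAt_integral_of_lipschitzWith [TopologicalSpace α] [CompactSpace α]
    [OpensMeasurableSpace α] [IsFiniteMeasure μ] [NormedSpace ℝ E] [FiniteDimensional ℝ E]
    [NormedSpace ℝ V] [FiniteDimensional ℝ V] (hF : Continuous F.uncurry) {K : ℝ≥0}
    (hlip : ∀ u, LipschitzWith K (F u)) {x₀ : E}
    (hdiff : ∀ᵐ u ∂μ, DifferentiableAt ℝ (F u) x₀) :
    HasFDerivAt (fun x => ∫ u, F u x ∂μ) (∫ u, fderiv ℝ (F u) x₀ ∂μ) x₀ := by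
  borelize E
  have hF' : Measurable fun u => fderiv ℝ (F u) x₀ :=
    (measurable_fderiv_with_param ℝ hF).comp (measurable_id.prodMk measurable_const)
  refine (hasFDerivAt_integral_of_dominated_loc_of_lip (F := fun x u => F u x)
    (bound := fun _ => K) Filter.univ_mem
    (.of_forall fun x => (integrable_apply_of_continuous_uncurry hF x).1)
    (integrable_apply_of_continuous_uncurry hF x₀) hF'.aestronglyMeasurable
    (.of_forall fun u => ?_) (integrable_const _) (hdiff.mono fun u hu => hu.hasFDerivAt)).2
  simpa using (hlip u).lipschitzOnWith (s := Set.univ)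

theorem norm_integral_fderiv_le_of_lipschitzWith [IsFiniteMeasure μ] [NormedSpace ℝ E]
    [NormedSpace ℝ V] {K : ℝ≥0} (hlip : ∀ u, LipschitzWith K (F u)) (x₀ : E) :
    ‖∫ u, fderiv ℝ (F u) x₀ ∂μ‖ ≤ K * μ.real Set.univ :=
  norm_integral_le_of_norm_le_const (.of_forall fun u => norm_fderiv_le_of_lipschitz ℝ (hlip u))

end ParametricIntegral

theorem norm_fderiv_inv_smul_le {E V : Type*} [NormedAddCommGroup E] [NormedSpace ℝ E]
    [NormedAddCommGroup V] [NormedSpace ℝ V] {f : E → ℝ} {g : E → V} {f' : E →L[ℝ] ℝ}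
    {g' : E →L[ℝ] V} {x : E} (hf : HasFDerivAt f f' x) (hg : HasFDerivAt g g' x)
    (hfx : 0 < f x) (hgx : ‖g x‖ ≤ f x) :
    ‖fderiv ℝ (fun y => (f y)⁻¹ • g y) x‖ ≤ (‖g'‖ + ‖f'‖) / f x := by
  have hinv : HasFDerivAt (fun y => (f y)⁻¹) (-(f x ^ 2)⁻¹ • f') x :=
    (hasDerivAt_inv hfx.ne').comp_hasFDerivAt x hf
  rw [(hinv.fun_smul hg).fderiv]
  calc _ ≤ (f x)⁻¹ * ‖g'‖ + ((f x ^ 2)⁻¹ * ‖f'‖) * ‖g x‖ := by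
        refine (norm_add_le _ _).trans_eq ?_
        rw [ContinuousLinearMap.norm_smulRight_apply, norm_smul, norm_smul, norm_neg, norm_inv,
          norm_inv, norm_pow, Real.norm_of_nonneg hfx.le]
    _ ≤ (f x)⁻¹ * ‖g'‖ + ((f x ^ 2)⁻¹ * ‖f'‖) * f x := by gcongr
    _ = (‖g'‖ + ‖f'‖) / f x := by field_simp

theorem MeasureTheory.Measure.toSphere_preimage_submodule_eq_zero {E : Type*}
    [NormedAddCommGroup E] [NormedSpace ℝ E] [FiniteDimensional ℝ E] [MeasurableSpace E]
    [BorelSpace E] (μ : Measure E) [μ.IsAddHaarMeasure] {K : Submodule ℝ E} (hK : K ≠ ⊤) :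
    μ.toSphere (((↑) : sphere (0 : E) 1 → E) ⁻¹' K) = 0 := by
  rw [μ.toSphere_apply' (K.closed_of_finiteDimensional.measurableSet.preimage
    measurable_subtype_coe)]
  refine mul_eq_zero_of_right _ (measure_mono_null ?_ (Measure.addHaar_submodule μ K hK))
  rintro _ ⟨r, -, _, ⟨u, hu, rfl⟩, rfl⟩
  exact K.smul_mem r hu

theorem ae_toSphere_mulVecCLM_ne_zero {m n : Type*} [Fintype m] [Fintype n] [DecidableEq n]
    (μ : Measure (EuclideanSpace ℝ n)) [μ.IsAddHaarMeasure] {G : Matrix m n ℝ} (hG : G ≠ 0) :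
    ∀ᵐ u : sphere (0 : EuclideanSpace ℝ n) 1 ∂μ.toSphere,
      mulVecCLM (u : EuclideanSpace ℝ n) G ≠ 0 := by
  have hK : LinearMap.ker (toLpLin 2 2 G) ≠ ⊤ := by
    rwa [Ne, LinearMap.ker_eq_top, LinearEquiv.map_eq_zero_iff]
  refine ae_iff.2 (measure_mono_null (fun u hu => ?_) (μ.toSphere_preimage_submodule_eq_zero hK))
  simpa [toLpLin_apply] using hu

theorem Matrix.dim_pos_of_ne_zero {d : ℕ} {G : Matrix (Fin d) (Fin d) ℝ} (hG : G ≠ 0) : 0 < d :=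
  Nat.pos_of_ne_zero (by rintro rfl; exact hG (Subsingleton.elim _ _))

section DoiEdwards

variable {d : ℕ}

local notation "𝕊" => sphere (0 : EuclideanSpace ℝ (Fin d)) 1

instance : IsFiniteMeasure (sphereSurf d) := by unfold sphereSurf; infer_instance

instance : (sphereSurf d).IsOpenPosMeasure := by unfold sphereSurf; infer_instance

variable (d) in
def desNumerator (M : Matrix (Fin d) (Fin d) ℝ) : Matrix (Fin d) (Fin d) ℝ :=
  ∫ u : 𝕊, outerDivNorm (mulVecCLM (u : EuclideanSpace ℝ (Fin d)) M) ∂sphereSurf d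

variable (d) in
def desDenominator (M : Matrix (Fin d) (Fin d) ℝ) : ℝ :=
  ∫ u : 𝕊, ‖mulVecCLM (u : EuclideanSpace ℝ (Fin d)) M‖ ∂sphereSurf d

theorem continuous_outerDivNorm_mulVecCLM :
    Continuous (Function.uncurry fun (u : 𝕊) (M : Matrix (Fin d) (Fin d) ℝ) =>
      outerDivNorm (mulVecCLM (u : EuclideanSpace ℝ (Fin d)) M)) :=
  lipschitzWith_outerDivNorm.continuous.comp (by simp only [mulVecCLM_apply]; fun_prop)

theorem continuous_norm_mulVecCLM :
    Continuous (Function.uncurry fun (u : 𝕊) (M : Matrix (Fin d) (Fin d) ℝ) =>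
      ‖mulVecCLM (u : EuclideanSpace ℝ (Fin d)) M‖) := by
  simp only [mulVecCLM_apply]
  fun_prop

theorem ae_mulVecCLM_ne_zero {G : Matrix (Fin d) (Fin d) ℝ} (hG : G ≠ 0) :
    ∀ᵐ u : 𝕊 ∂sphereSurf d, mulVecCLM (u : EuclideanSpace ℝ (Fin d)) G ≠ 0 :=
  ae_toSphere_mulVecCLM_ne_zero (volume : Measure (EuclideanSpace ℝ (Fin d))) hG

theorem lipschitzWith_outerDivNorm_mulVecCLM (u : 𝕊) :
    LipschitzWith 3 fun M : Matrix (Fin d) (Fin d) ℝ =>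
      outerDivNorm (mulVecCLM (u : EuclideanSpace ℝ (Fin d)) M) :=
  (lipschitzWith_outerDivNorm.comp (lipschitzWith_mulVecCLM (norm_eq_of_mem_sphere u))).weaken
    (mul_one _).le

theorem lipschitzWith_norm_mulVecCLM (u : 𝕊) :
    LipschitzWith 1 fun M : Matrix (Fin d) (Fin d) ℝ =>
      ‖mulVecCLM (u : EuclideanSpace ℝ (Fin d)) M‖ :=
  (lipschitzWith_one_norm.comp (lipschitzWith_mulVecCLM (norm_eq_of_mem_sphere u))).weaken
    (mul_one _).le

theorem desDenominator_pos {G : Matrix (Fin d) (Fin d) ℝ} (hG : G ≠ 0) :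
    0 < desDenominator d G := by
  have : Nonempty (Fin d) := ⟨⟨0, G.dim_pos_of_ne_zero hG⟩⟩
  have : (ae (sphereSurf d)).NeBot :=
    ae_neBot.2 (by unfold sphereSurf; exact Measure.toSphere_ne_zero _)
  obtain ⟨u, hu⟩ := (ae_mulVecCLM_ne_zero hG).exists
  exact integral_pos_of_integrable_nonneg_nonzero (continuous_norm_mulVecCLM.uncurry_right G)
    (integrable_apply_of_continuous_uncurry continuous_norm_mulVecCLM G) (fun _ => norm_nonneg _)
    (norm_ne_zero_iff.2 hu)

theorem norm_desNumerator_le (M : Matrix (Fin d) (Fin d) ℝ) :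
    ‖desNumerator d M‖ ≤ desDenominator d M := by
  unfold desNumerator desDenominator
  exact norm_integral_le_of_norm_le
    (integrable_apply_of_continuous_uncurry continuous_norm_mulVecCLM M)
    (.of_forall fun _ => norm_outerDivNorm_le _)

theorem euclNorm_eq_norm (v : Fin d → ℝ) : euclNorm v = ‖toLp 2 v‖ := by
  simp [euclNorm, EuclideanSpace.norm_eq]

theorem desDenominator_eq (M : Matrix (Fin d) (Fin d) ℝ) :
    desDenominator d M = ∫ u : 𝕊, euclNorm (M.mulVec u) ∂sphereSurf d := by
  simp [desDenominator, euclNorm_eq_norm]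

variable (d) in
/-- The `1 / d` in `DES` is a natural-number quotient cast to `ℝ`; only its independence of `M`
matters. -/
theorem DES_eq_inv_smul_sub : DES d = fun M => (desDenominator d M)⁻¹ • desNumerator d M -
    Matrix.of fun k l => ((if k = l then 1 / d else 0 : ℕ) : ℝ) := by
  ext M k l
  have hentry : desNumerator d M k l =
      ∫ u : 𝕊, outerDivNorm (mulVecCLM (u : EuclideanSpace ℝ (Fin d)) M) k l ∂sphereSurf d :=
    ((entryLinearMap ℝ ℝ k l).toContinuousLinearMap.integral_comp_comm
      (integrable_apply_of_continuous_uncurry continuous_outerDivNorm_mulVecCLM M)).symm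
  simp only [DES, Matrix.sub_apply, Matrix.smul_apply, Matrix.of_apply, smul_eq_mul, hentry,
    desDenominator_eq, div_eq_inv_mul]
  congr 3
  ext u
  simp [outerDivNorm, vecMulVec_apply, euclNorm_eq_norm]

end DoiEdwards

theorem stmt2_general (d : ℕ) (G : Matrix (Fin d) (Fin d) ℝ) (hG : G ≠ 0) :
    DifferentiableAt ℝ (DES d) G ∧
    @Norm.norm (Matrix (Fin d) (Fin d) ℝ →L[ℝ] Matrix (Fin d) (Fin d) ℝ)
      (@ContinuousLinearMap.hasOpNorm ℝ ℝ (Matrix (Fin d) (Fin d) ℝ) (Matrix (Fin d) (Fin d) ℝ)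
        _ _ _ _ _ _ (RingHom.id ℝ)) (fderiv ℝ (DES d) G) ≤ 2 * (1 + Real.sqrt d) * (sphereSurf d Set.univ).toReal /
      (∫ u : sphere (0 : EuclideanSpace ℝ (Fin d)) 1,
        euclNorm (G.mulVec u) ∂ sphereSurf d) := by
  have hae := ae_mulVecCLM_ne_zero hG
  have hnum : HasFDerivAt (desNumerator d) _ G :=
    hasFDerivAt_integral_of_lipschitzWith continuous_outerDivNorm_mulVecCLM
      lipschitzWith_outerDivNorm_mulVecCLM
      (hae.mono fun u hu =>
        (differentiableAt_outerDivNorm hu).comp G (mulVecCLM _).differentiableAt)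
  have hden : HasFDerivAt (desDenominator d) _ G :=
    hasFDerivAt_integral_of_lipschitzWith continuous_norm_mulVecCLM lipschitzWith_norm_mulVecCLM
      (hae.mono fun u hu => (mulVecCLM _).differentiableAt.norm ℝ hu)
  have hpos := desDenominator_pos hG
  rw [DES_eq_inv_smul_sub, ← desDenominator_eq]
  refine ⟨((hden.differentiableAt.inv hpos.ne').smul hnum.differentiableAt).sub_const _, ?_⟩
  -- `rw [fderiv_sub_const]` does not fire: the goal's `fderiv` carries the product topology of
  -- `Matrix`, the lemma the Frobenius one (equal, but not reducibly so).
  refine (congrArg (fun T => ‖T‖) (fderiv_sub_const (𝕜 := ℝ)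
    (f := fun M => (desDenominator d M)⁻¹ • desNumerator d M) (x := G) _)).trans_le ?_
  refine (norm_fderiv_inv_smul_le hden hnum hpos (norm_desNumerator_le G)).trans ?_
  have hN' := norm_integral_fderiv_le_of_lipschitzWith (μ := sphereSurf d)
    lipschitzWith_outerDivNorm_mulVecCLM G
  have hD' := norm_integral_fderiv_le_of_lipschitzWith (μ := sphereSurf d)
    lipschitzWith_norm_mulVecCLM G
  have hsqrt : 1 ≤ √(d : ℝ) := Real.one_le_sqrt.2 (by exact_mod_cast G.dim_pos_of_ne_zero hG)
  rw [← measureReal_def]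
  gcongr
  push_cast at hN' hD'
  nlinarith [measureReal_nonneg (μ := sphereSurf d) (s := Set.univ)]

/-- **Inequality (4.4) in the proof of Proposition 4.1.** For every nonzero real `d × d`
matrix `G`, the map `𝒮` is differentiable at `G` and its Fréchet derivative satisfies
`‖D𝒮(G)‖ ≤ 2(1 + √d) · σ(𝕊^{d-1}) / ∫_{𝕊^{d-1}} |G·u| dσ(u)`. -/
theorem stmt2 (d : ℕ) (hd : 2 ≤ d) (G : Matrix (Fin d) (Fin d) ℝ) (hG : G ≠ 0) :
    DifferentiableAt ℝ (DES d) G ∧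
    @Norm.norm (Matrix (Fin d) (Fin d) ℝ →L[ℝ] Matrix (Fin d) (Fin d) ℝ)
      (@ContinuousLinearMap.hasOpNorm ℝ ℝ (Matrix (Fin d) (Fin d) ℝ) (Matrix (Fin d) (Fin d) ℝ)
        _ _ _ _ _ _ (RingHom.id ℝ)) (fderiv ℝ (DES d) G) ≤ 2 * (1 + Real.sqrt d) * (sphereSurf d Set.univ).toReal /
      (∫ u : sphere (0 : EuclideanSpace ℝ (Fin d)) 1,
        euclNorm (G.mulVec u) ∂ sphereSurf d) :=
  stmt2_general d G hG
end
end

section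
/- Proposition 4.6. Let ξ₀, ξ₁, ξ₂ > 0 and k > 0, set c = ξ₀·ξ₂^{k+1}/(k+1) and b = (ℓ/ξ₁)·e^{c}. Then the function y : [0,b) → ℝ defined by y(x) = F^{−1}(ξ₁·e^{−c}·x) is twice differentiable, satisfies y(0) = 0, y′(0) = ξ₁, and y″(x) = ξ₀·(y(x)+ξ₂)^{k}·(y′(x))² for all x ∈ [0,b). Moreover this solution is unique: any twice-differentiable z : [0,b′) → ℝ with 0 < b′ ≤ b satisfying z(0) = 0, z′(0) = ξ₁ and z″(x) = ξ₀·(z(x)+ξ₂)^{k}·(z′(x))² on [0,b′) coincides with y on [0,b′). -/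
open MeasureTheory

noncomputable section

/-- The auxiliary function `F` of Section 4.5:
`F(X) = ∫₀^X exp(−ξ₀·(x+ξ₂)^{k+1}/(k+1)) dx`. -/
def Ffun (ξ₀ ξ₂ k : ℝ) (X : ℝ) : ℝ :=
  ∫ x in (0 : ℝ)..X, Real.exp (-ξ₀ * (x + ξ₂) ^ (k + 1) / (k + 1))

/-- The limit `ℓ = ∫₀^∞ exp(−ξ₀·(x+ξ₂)^{k+1}/(k+1)) dx`. -/
def ellConst (ξ₀ ξ₂ k : ℝ) : ℝ :=
  ∫ x in Set.Ioi (0 : ℝ), Real.exp (-ξ₀ * (x + ξ₂) ^ (k + 1) / (k + 1))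

/-- The inverse `F⁻¹ : [0,ℓ) → [0,∞)` of the strictly increasing bijection
`F : [0,∞) → [0,ℓ)`. -/
def Finv (ξ₀ ξ₂ k : ℝ) (z : ℝ) : ℝ :=
  Function.invFunOn (Ffun ξ₀ ξ₂ k) (Set.Ici 0) z

/-!
Write `Φ(x) = ξ₀ (x + ξ₂)^(k+1) / (k+1)` (`Fpot` below), so that `F' = exp (-Φ)` and
`Φ' = ξ₀ (x + ξ₂)^k`. Along any solution `z` of `z'' = ξ₀ (z + ξ₂)^k z'^2` the quantity
`exp (-Φ z) z'` has derivative `exp (-Φ z) (z'' - ξ₀ (z + ξ₂)^k z'^2) = 0`, so it keeps its initial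
value `a = ξ₁ e^{-c}`; hence `(F ∘ z)' = a`, i.e. `F (z x) = a x` and `z x = F⁻¹ (a x)`.
Conversely `y = F⁻¹ (a x)` is differentiable by the inverse function rule, with
`y' = a / F' (y) = a exp (Φ y)`, and differentiating this once more gives the equation.
-/

open Set Filter Topology

theorem HasDerivWithinAt.of_comp_left {𝕜 : Type*} [NontriviallyNormedField 𝕜] {f g h : 𝕜 → 𝕜}
    {f' h' a : 𝕜} {s : Set 𝕜} (hg : ContinuousWithinAt g s a) (hf : HasDerivAt f f' (g a))
    (hh : HasDerivWithinAt h h' s a) (hf' : f' ≠ 0) (hcomp : f ∘ g =ᶠ[𝓝[s] a] h) (ha : a ∈ s) :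
    HasDerivWithinAt g (h' / f') s a := by
  convert! (hf.hasFDerivAt.hasFDerivWithinAt (s := univ)).of_comp_of_leftInverse
    (by simpa using hg.tendsto) hh hcomp (f'symm := .toSpanSingleton 𝕜 f'⁻¹)
    (fun _ ↦ by simp [hf']) ha |>.hasDerivWithinAt using 1
  simp [div_eq_mul_inv]

theorem StrictMonoOn.continuousOn_invFunOn_image {α β : Type*} [LinearOrder α]
    [TopologicalSpace α] [OrderTopology α] [LinearOrder β] [TopologicalSpace β] [OrderTopology β]
    [Nonempty α] {f : α → β} {s : Set α} (hf : StrictMonoOn f s) [s.OrdConnected]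
    [(f '' s).OrdConnected] : ContinuousOn (Function.invFunOn f s) (f '' s) := by
  have hrestrict : (f '' s).domRestrict (Function.invFunOn f s) = Subtype.val ∘ (hf.orderIso f s).symm := by
    funext ⟨_, x, hx, rfl⟩
    have hsymm : (hf.orderIso f s).symm ⟨f x, x, hx, rfl⟩ = ⟨x, hx⟩ :=
      (hf.orderIso f s).symm_apply_eq.2 rfl
    simp [hsymm, hf.injOn.leftInvOn_invFunOn hx]
  rw [continuousOn_iff_continuous_domRestrict, hrestrict]
  exact continuous_subtype_val.comp (hf.orderIso f s).symm.continuous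

theorem Convex.eq_of_hasDerivWithinAt_zero {f : ℝ → ℝ} {s : Set ℝ} (hs : Convex ℝ s)
    (hf : ∀ x ∈ s, HasDerivWithinAt f 0 s x) {x y : ℝ} (hx : x ∈ s) (hy : y ∈ s) : f x = f y := by
  simpa [sub_eq_zero] using
    (hs.norm_image_sub_le_of_norm_hasDerivWithin_le hf (fun _ _ => norm_zero.le) hy hx).antisymm

def Fpot (ξ₀ ξ₂ k x : ℝ) : ℝ := ξ₀ * (x + ξ₂) ^ (k + 1) / (k + 1)

section

variable {ξ₀ ξ₂ k : ℝ}

theorem hasDerivAt_Fpot (hk : 0 ≤ k) (x : ℝ) :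
    HasDerivAt (Fpot ξ₀ ξ₂ k) (ξ₀ * (x + ξ₂) ^ k) x := by
  have hrpow := (Real.hasDerivAt_rpow_const (x := x + ξ₂) (Or.inr (by linarith : 1 ≤ k + 1))).comp x
    ((hasDerivAt_id x).add_const ξ₂)
  refine ((hrpow.const_mul ξ₀).div_const (k + 1)).congr_deriv ?_
  have : k + 1 ≠ 0 := by linarith
  simp only [add_sub_cancel_right, mul_one]
  field_simp

theorem continuous_Fpot (hk : 0 ≤ k) : Continuous (Fpot ξ₀ ξ₂ k) :=
  continuous_iff_continuousAt.2 fun x => (hasDerivAt_Fpot hk x).continuousAt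

theorem Ffun_eq_integral (X : ℝ) :
    Ffun ξ₀ ξ₂ k X = ∫ x in (0 : ℝ)..X, Real.exp (-Fpot ξ₀ ξ₂ k x) := by
  simp only [Ffun, Fpot, neg_mul, neg_div]

theorem ellConst_eq_integral :
    ellConst ξ₀ ξ₂ k = ∫ x in Ioi (0 : ℝ), Real.exp (-Fpot ξ₀ ξ₂ k x) := by
  simp only [ellConst, Fpot, neg_mul, neg_div]

theorem Ffun_zero : Ffun ξ₀ ξ₂ k 0 = 0 := intervalIntegral.integral_same

theorem hasDerivAt_Ffun (hk : 0 ≤ k) (X : ℝ) :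
    HasDerivAt (Ffun ξ₀ ξ₂ k) (Real.exp (-Fpot ξ₀ ξ₂ k X)) X := by
  have hc : Continuous fun x => Real.exp (-Fpot ξ₀ ξ₂ k x) := (continuous_Fpot hk).neg.rexp
  rw [funext Ffun_eq_integral]
  exact intervalIntegral.integral_hasDerivAt_right (hc.intervalIntegrable _ _)
    hc.stronglyMeasurable.stronglyMeasurableAtFilter hc.continuousAt

theorem Ffun_strictMono (hk : 0 ≤ k) : StrictMono (Ffun ξ₀ ξ₂ k) :=
  strictMono_of_hasDerivAt_pos (hasDerivAt_Ffun hk) fun _ => Real.exp_pos _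

theorem mul_le_Fpot (h0 : 0 ≤ ξ₀) (h2 : 0 < ξ₂) (hk : 0 ≤ k) {x : ℝ} (hx : 0 ≤ x) :
    ξ₀ * ξ₂ ^ k / (k + 1) * x ≤ Fpot ξ₀ ξ₂ k x := by
  have hpow : ξ₂ ^ k ≤ (x + ξ₂) ^ k := Real.rpow_le_rpow h2.le (by linarith) hk
  have : ξ₂ ^ k * x ≤ (x + ξ₂) ^ (k + 1) := by
    rw [Real.rpow_add_one (by linarith)]
    exact mul_le_mul hpow (by linarith) hx (by positivity)
  rw [Fpot, div_mul_eq_mul_div, mul_assoc]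
  gcongr

theorem integrableOn_exp_neg_Fpot (h0 : 0 < ξ₀) (h2 : 0 < ξ₂) (hk : 0 ≤ k) :
    IntegrableOn (fun x => Real.exp (-Fpot ξ₀ ξ₂ k x)) (Ioi 0) := by
  have hC : 0 < ξ₀ * ξ₂ ^ k / (k + 1) := by positivity
  refine (exp_neg_integrableOn_Ioi 0 hC).mono' (continuous_Fpot hk).neg.rexp.aestronglyMeasurable
    ((ae_restrict_iff' measurableSet_Ioi).2 (ae_of_all _ fun x (hx : 0 < x) => ?_))
  rw [Real.norm_of_nonneg (Real.exp_pos _).le, Real.exp_le_exp, neg_mul, neg_le_neg_iff]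
  exact mul_le_Fpot h0.le h2 hk hx.le

theorem Ffun_lt_ellConst (h0 : 0 < ξ₀) (h2 : 0 < ξ₂) (hk : 0 ≤ k) {X : ℝ} (hX : 0 ≤ X) :
    Ffun ξ₀ ξ₂ k X < ellConst ξ₀ ξ₂ k := by
  have hint := integrableOn_exp_neg_Fpot h0 h2 hk
  have : NeZero (volume.restrict (Ioi X)) := ⟨by simp [Measure.restrict_eq_zero]⟩
  have htail : 0 < ∫ x in Ioi X, Real.exp (-Fpot ξ₀ ξ₂ k x) :=
    integral_exp_pos (hint.mono_set (Ioi_subset_Ioi hX))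
  have hsplit := setIntegral_union (Ioc_disjoint_Ioi le_rfl) measurableSet_Ioi
    (hint.mono_set Ioc_subset_Ioi_self) (hint.mono_set (Ioi_subset_Ioi hX))
  rw [Ioc_union_Ioi_eq_Ioi hX] at hsplit
  rw [ellConst_eq_integral, hsplit, Ffun_eq_integral, intervalIntegral.integral_of_le hX]
  linarith

theorem ellConst_pos (h0 : 0 < ξ₀) (h2 : 0 < ξ₂) (hk : 0 ≤ k) : 0 < ellConst ξ₀ ξ₂ k :=
  Ffun_zero (ξ₀ := ξ₀) ▸ Ffun_lt_ellConst h0 h2 hk le_rfl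

theorem tendsto_Ffun_atTop (h0 : 0 < ξ₀) (h2 : 0 < ξ₂) (hk : 0 ≤ k) :
    Tendsto (Ffun ξ₀ ξ₂ k) atTop (𝓝 (ellConst ξ₀ ξ₂ k)) := by
  simp_rw [funext Ffun_eq_integral, ellConst_eq_integral]
  exact intervalIntegral_tendsto_integral_Ioi 0 (integrableOn_exp_neg_Fpot h0 h2 hk) tendsto_id

theorem Ffun_image_Ici (h0 : 0 < ξ₀) (h2 : 0 < ξ₂) (hk : 0 ≤ k) :
    Ffun ξ₀ ξ₂ k '' Ici 0 = Ico 0 (ellConst ξ₀ ξ₂ k) := by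
  refine Subset.antisymm ?_ ?_
  · rintro _ ⟨X, hX, rfl⟩
    exact ⟨Ffun_zero (ξ₀ := ξ₀) ▸ (Ffun_strictMono hk).monotone hX, Ffun_lt_ellConst h0 h2 hk hX⟩
  · simpa only [Ffun_zero] using isPreconnected_Ici.intermediate_value_Ico self_mem_Ici
      (le_principal_iff.2 (Ici_mem_atTop 0))
      (fun X _ => (hasDerivAt_Ffun hk X).continuousAt.continuousWithinAt)
      (tendsto_Ffun_atTop h0 h2 hk)

theorem surjOn_Ffun (h0 : 0 < ξ₀) (h2 : 0 < ξ₂) (hk : 0 ≤ k) :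
    SurjOn (Ffun ξ₀ ξ₂ k) (Ici 0) (Ico 0 (ellConst ξ₀ ξ₂ k)) := by
  rw [← Ffun_image_Ici h0 h2 hk]
  exact surjOn_image _ _

theorem Ffun_Finv (h0 : 0 < ξ₀) (h2 : 0 < ξ₂) (hk : 0 ≤ k) {t : ℝ}
    (ht : t ∈ Ico 0 (ellConst ξ₀ ξ₂ k)) : Ffun ξ₀ ξ₂ k (Finv ξ₀ ξ₂ k t) = t :=
  (surjOn_Ffun h0 h2 hk).rightInvOn_invFunOn ht

theorem Finv_Ffun (hk : 0 ≤ k) {X : ℝ} (hX : 0 ≤ X) : Finv ξ₀ ξ₂ k (Ffun ξ₀ ξ₂ k X) = X :=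
  (Ffun_strictMono hk).injective.injOn.leftInvOn_invFunOn hX

theorem Finv_zero (hk : 0 ≤ k) : Finv ξ₀ ξ₂ k 0 = 0 := by
  simpa only [Ffun_zero] using Finv_Ffun (ξ₀ := ξ₀) (ξ₂ := ξ₂) hk le_rfl

theorem continuousOn_Finv (h0 : 0 < ξ₀) (h2 : 0 < ξ₂) (hk : 0 ≤ k) :
    ContinuousOn (Finv ξ₀ ξ₂ k) (Ico 0 (ellConst ξ₀ ξ₂ k)) := by
  have : (Ffun ξ₀ ξ₂ k '' Ici 0).OrdConnected := by
    rw [Ffun_image_Ici h0 h2 hk]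
    infer_instance
  rw [← Ffun_image_Ici h0 h2 hk]
  exact ((Ffun_strictMono hk).strictMonoOn _).continuousOn_invFunOn_image

theorem hasDerivWithinAt_Finv_comp_mul (h0 : 0 < ξ₀) (h2 : 0 < ξ₂) (hk : 0 ≤ k) {a b x : ℝ}
    (ha : 0 < a) (hab : a * b ≤ ellConst ξ₀ ξ₂ k) (hx : x ∈ Ico 0 b) :
    HasDerivWithinAt (fun u => Finv ξ₀ ξ₂ k (a * u))
      (a * Real.exp (Fpot ξ₀ ξ₂ k (Finv ξ₀ ξ₂ k (a * x)))) (Ico 0 b) x := by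
  have hmaps : MapsTo (a * ·) (Ico 0 b) (Ico 0 (ellConst ξ₀ ξ₂ k)) := fun u hu =>
    ⟨mul_nonneg ha.le hu.1, (mul_lt_mul_of_pos_left hu.2 ha).trans_le hab⟩
  have hcont : ContinuousWithinAt (fun u => Finv ξ₀ ξ₂ k (a * u)) (Ico 0 b) x :=
    ((continuousOn_Finv h0 h2 hk).continuousWithinAt (hmaps hx)).comp
      (continuous_const_mul a).continuousWithinAt hmaps
  have hinv : ∀ᶠ u in 𝓝[Ico 0 b] x, Ffun ξ₀ ξ₂ k (Finv ξ₀ ξ₂ k (a * u)) = a * u :=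
    eventually_mem_nhdsWithin.mono fun u hu => Ffun_Finv h0 h2 hk (hmaps hu)
  refine (HasDerivWithinAt.of_comp_left hcont (hasDerivAt_Ffun hk _)
    ((hasDerivWithinAt_id x _).const_mul a) (Real.exp_pos _).ne' hinv hx).congr_deriv ?_
  rw [Real.exp_neg, div_inv_eq_mul, mul_one]

theorem hasDerivWithinAt_mul_exp_Fpot_Finv_comp_mul (h0 : 0 < ξ₀) (h2 : 0 < ξ₂) (hk : 0 ≤ k)
    {a b x : ℝ} (ha : 0 < a) (hab : a * b ≤ ellConst ξ₀ ξ₂ k) (hx : x ∈ Ico 0 b) :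
    HasDerivWithinAt (fun u => a * Real.exp (Fpot ξ₀ ξ₂ k (Finv ξ₀ ξ₂ k (a * u))))
      (ξ₀ * (Finv ξ₀ ξ₂ k (a * x) + ξ₂) ^ k *
        (a * Real.exp (Fpot ξ₀ ξ₂ k (Finv ξ₀ ξ₂ k (a * x)))) ^ 2) (Ico 0 b) x := by
  refine (((hasDerivAt_Fpot hk _).comp_hasDerivWithinAt x
    (hasDerivWithinAt_Finv_comp_mul h0 h2 hk ha hab hx)).exp.const_mul a).congr_deriv ?_
  simp only [Function.comp_apply]
  ring

section Uniqueness

variable {z z' : ℝ → ℝ} {s : Set ℝ}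

theorem exp_neg_Fpot_mul_eq_of_ode (hk : 0 ≤ k) (hs : Convex ℝ s)
    (hz : ∀ x ∈ s, HasDerivWithinAt z (z' x) s x)
    (hz' : ∀ x ∈ s, HasDerivWithinAt z' (ξ₀ * (z x + ξ₂) ^ k * z' x ^ 2) s x)
    {x₀ x : ℝ} (hx₀ : x₀ ∈ s) (hx : x ∈ s) :
    Real.exp (-Fpot ξ₀ ξ₂ k (z x)) * z' x = Real.exp (-Fpot ξ₀ ξ₂ k (z x₀)) * z' x₀ := by
  refine hs.eq_of_hasDerivWithinAt_zero (f := fun u => Real.exp (-Fpot ξ₀ ξ₂ k (z u)) * z' u)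
    (fun u hu => ?_) hx hx₀
  refine (((hasDerivAt_Fpot hk (z u)).comp_hasDerivWithinAt u (hz u hu)).neg.exp.mul
    (hz' u hu)).congr_deriv ?_
  ring

theorem Ffun_comp_sub_eq_of_ode (hk : 0 ≤ k) (hs : Convex ℝ s)
    (hz : ∀ x ∈ s, HasDerivWithinAt z (z' x) s x)
    (hz' : ∀ x ∈ s, HasDerivWithinAt z' (ξ₀ * (z x + ξ₂) ^ k * z' x ^ 2) s x)
    {x₀ x : ℝ} (hx₀ : x₀ ∈ s) (hx : x ∈ s) :
    Ffun ξ₀ ξ₂ k (z x) - Ffun ξ₀ ξ₂ k (z x₀) =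
      Real.exp (-Fpot ξ₀ ξ₂ k (z x₀)) * z' x₀ * (x - x₀) := by
  set w := Real.exp (-Fpot ξ₀ ξ₂ k (z x₀)) * z' x₀
  have hconst := hs.eq_of_hasDerivWithinAt_zero (f := fun u => Ffun ξ₀ ξ₂ k (z u) - w * u)
    (fun u hu => ?_) hx hx₀
  · linarith
  refine (((hasDerivAt_Ffun hk (z u)).comp_hasDerivWithinAt u (hz u hu)).sub
    ((hasDerivWithinAt_id u s).const_mul w)).congr_deriv ?_
  rw [exp_neg_Fpot_mul_eq_of_ode hk hs hz hz' hx₀ hu]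
  ring

theorem eqOn_Finv_comp_of_ode (hk : 0 ≤ k) (hs : Convex ℝ s) (hs_nonneg : s ⊆ Ici 0)
    (h0s : 0 ∈ s) (hz : ∀ x ∈ s, HasDerivWithinAt z (z' x) s x)
    (hz' : ∀ x ∈ s, HasDerivWithinAt z' (ξ₀ * (z x + ξ₂) ^ k * z' x ^ 2) s x)
    (hz0 : z 0 = 0) (hz'0 : 0 ≤ z' 0) :
    EqOn z (fun x => Finv ξ₀ ξ₂ k (z' 0 * Real.exp (-Fpot ξ₀ ξ₂ k 0) * x)) s := by
  intro x hx
  have hF : Ffun ξ₀ ξ₂ k (z x) = z' 0 * Real.exp (-Fpot ξ₀ ξ₂ k 0) * x := by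
    have := Ffun_comp_sub_eq_of_ode hk hs hz hz' h0s hx
    rw [hz0, Ffun_zero] at this
    linarith
  have hzx : 0 ≤ z x := by
    rw [← (Ffun_strictMono hk).le_iff_le, Ffun_zero, hF]
    exact mul_nonneg (mul_nonneg hz'0 (Real.exp_pos _).le) (hs_nonneg hx)
  show z x = Finv ξ₀ ξ₂ k _
  rw [← hF, Finv_Ffun hk hzx]

end Uniqueness

end

/-- **Proposition 4.6.** With `c = ξ₀·ξ₂^{k+1}/(k+1)` and `b = (ℓ/ξ₁)·e^c`, the function
`y(x) = F⁻¹(ξ₁·e^{−c}·x)` on `[0,b)` is twice differentiable, satisfies `y(0) = 0`,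
`y′(0) = ξ₁` and `y″ = ξ₀·(y+ξ₂)^k·(y′)²` on `[0,b)`; moreover any twice-differentiable
solution of this Cauchy problem on `[0,b′)` with `0 < b′ ≤ b` coincides with `y` there. -/
theorem stmt11 (ξ₀ ξ₁ ξ₂ k : ℝ) (h0 : 0 < ξ₀) (h1 : 0 < ξ₁) (h2 : 0 < ξ₂) (hk : 0 < k) :
    ∀ c b : ℝ, c = ξ₀ * ξ₂ ^ (k + 1) / (k + 1) → b = ellConst ξ₀ ξ₂ k / ξ₁ * Real.exp c →
    ∀ y : ℝ → ℝ, y = (fun x => Finv ξ₀ ξ₂ k (ξ₁ * Real.exp (-c) * x)) →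
      (∀ x ∈ Set.Ico (0 : ℝ) b,
        DifferentiableWithinAt ℝ y (Set.Ico 0 b) x ∧
        DifferentiableWithinAt ℝ (fun z => derivWithin y (Set.Ico 0 b) z) (Set.Ico 0 b) x) ∧
      y 0 = 0 ∧
      derivWithin y (Set.Ico 0 b) 0 = ξ₁ ∧
      (∀ x ∈ Set.Ico (0 : ℝ) b,
        derivWithin (fun z => derivWithin y (Set.Ico 0 b) z) (Set.Ico 0 b) x =
          ξ₀ * (y x + ξ₂) ^ k * derivWithin y (Set.Ico 0 b) x ^ 2) ∧
      (∀ b' : ℝ, 0 < b' → b' ≤ b → ∀ z z' : ℝ → ℝ,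
        (∀ x ∈ Set.Ico (0 : ℝ) b', HasDerivWithinAt z (z' x) (Set.Ico 0 b') x) →
        (∀ x ∈ Set.Ico (0 : ℝ) b',
          HasDerivWithinAt z' (ξ₀ * (z x + ξ₂) ^ k * z' x ^ 2) (Set.Ico 0 b') x) →
        z 0 = 0 → z' 0 = ξ₁ → Set.EqOn z y (Set.Ico 0 b')) := by
  intro c b hc hb y hy
  have hcF : c = Fpot ξ₀ ξ₂ k 0 := by rw [hc, Fpot, zero_add]
  have ha : 0 < ξ₁ * Real.exp (-c) := by positivity
  have hab : ξ₁ * Real.exp (-c) * b = ellConst ξ₀ ξ₂ k := by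
    rw [hb, Real.exp_neg]
    field_simp
  have hb0 : (0 : ℝ) ∈ Ico 0 b := ⟨le_rfl, hb ▸ by positivity [ellConst_pos h0 h2 hk.le]⟩
  subst hy
  have hy1 := fun x (hx : x ∈ Ico 0 b) => hasDerivWithinAt_Finv_comp_mul h0 h2 hk.le ha hab.le hx
  have hy2 := fun x (hx : x ∈ Ico 0 b) =>
    (hasDerivWithinAt_mul_exp_Fpot_Finv_comp_mul h0 h2 hk.le ha hab.le hx).congr_of_mem
      (fun u hu => (hy1 u hu).derivWithin (uniqueDiffOn_Ico 0 b u hu)) hx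
  refine ⟨fun x hx => ⟨(hy1 x hx).differentiableWithinAt, (hy2 x hx).differentiableWithinAt⟩,
    by simp [Finv_zero hk.le], ?_, fun x hx => ?_, fun b' _ _ z z' hz hz' hz0 hz'0 => ?_⟩
  · rw [(hy1 0 hb0).derivWithin (uniqueDiffOn_Ico 0 b 0 hb0), mul_zero, Finv_zero hk.le, ← hcF,
      Real.exp_neg, inv_mul_cancel_right₀ (Real.exp_pos c).ne']
  · rw [(hy2 x hx).derivWithin (uniqueDiffOn_Ico 0 b x hx),
      (hy1 x hx).derivWithin (uniqueDiffOn_Ico 0 b x hx)]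
  · have := eqOn_Finv_comp_of_ode hk.le (convex_Ico 0 b') Ico_subset_Ici_self
      ⟨le_rfl, ‹0 < b'›⟩ hz hz' hz0 (hz'0 ▸ h1.le)
    rwa [hz'0, ← hcF] at this
end
end

section
/- Let k ≥ 2 be an integer, ξ₂ > 0, and set ξ₀ = (k·ξ₂)^{−(k+1)}. Then k·(k/2)^{1/(k+1)}·ξ₂ − ξ₂ ≥ 0 and F(k·(k/2)^{1/(k+1)}·ξ₂ − ξ₂) · exp(ξ₀·ξ₂^{k+1}/(k+1)) ≥ (e^{−1/2}/2)·k·ξ₂. (Lower bound for the parameter ξ₁ of the truncation construction; Remark 7.1, point 3, culminating in estimate (7.21).) -/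
/-!
The integrand of `F` is decreasing in `x`, so `F(X)` is at least `X` times its value at the
endpoint `X`. The endpoint `X = k·(k/2)^{1/(k+1)}·ξ₂ − ξ₂` is chosen so that
`ξ₀·(X + ξ₂)^{k+1} = k/2`, whence the integrand stays above `exp(−(k/2)/(k+1)) ≥ e^{−1/2}`
on `[0, X]`; and `X ≥ (k − 1)·ξ₂ ≥ k·ξ₂/2` because `k ≥ 2`. The remaining exponential factor
is at least `1`.
-/

open MeasureTheory

noncomputable section

lemma Real.rpow_neg_mul_mul_rpow_one_div_rpow {a b q : ℝ} (ha : 0 < a) (hb : 0 ≤ b)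
    (hq : q ≠ 0) : a ^ (-q) * (a * b ^ (1 / q)) ^ q = b := by
  rw [Real.mul_rpow ha.le (by positivity), ← mul_assoc, ← Real.rpow_add ha, neg_add_cancel,
    Real.rpow_zero, one_mul, ← Real.rpow_mul hb, one_div_mul_cancel hq, Real.rpow_one]

lemma mul_exp_le_Ffun {ξ₀ ξ₂ p X : ℝ} (hξ₀ : 0 ≤ ξ₀) (hξ₂ : 0 ≤ ξ₂) (hp : 0 < p + 1)
    (hX : 0 ≤ X) :
    X * Real.exp (-ξ₀ * (X + ξ₂) ^ (p + 1) / (p + 1)) ≤ Ffun ξ₀ ξ₂ p X := by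
  have hcont : Continuous fun x : ℝ => Real.exp (-ξ₀ * (x + ξ₂) ^ (p + 1) / (p + 1)) := by
    refine Real.continuous_exp.comp (Continuous.div_const ?_ _)
    exact continuous_const.mul ((continuous_id.add continuous_const).rpow_const
      fun _ => Or.inr hp.le)
  have hantitone : ∀ x ∈ Set.Icc 0 X, Real.exp (-ξ₀ * (X + ξ₂) ^ (p + 1) / (p + 1)) ≤
      Real.exp (-ξ₀ * (x + ξ₂) ^ (p + 1) / (p + 1)) := by
    rintro x ⟨hx0, hxX⟩
    rw [Real.exp_le_exp, neg_mul, neg_mul, neg_div, neg_div, neg_le_neg_iff]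
    gcongr
  simpa [Ffun] using intervalIntegral.integral_mono_on hX (intervalIntegrable_const (μ := volume))
    (hcont.intervalIntegrable 0 X) hantitone

/-- **Remark 7.1, point 3 (estimate (7.21)).** For an integer `k ≥ 2`, `ξ₂ > 0` and
`ξ₀ = (k·ξ₂)^{−(k+1)}`, one has `k·(k/2)^{1/(k+1)}·ξ₂ − ξ₂ ≥ 0` and
`F(k·(k/2)^{1/(k+1)}·ξ₂ − ξ₂) · exp(ξ₀·ξ₂^{k+1}/(k+1)) ≥ (e^{−1/2}/2)·k·ξ₂`. -/
theorem stmt12 (k : ℕ) (hk : 2 ≤ k) (ξ₂ : ℝ) (h2 : 0 < ξ₂) :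
    ∀ ξ₀ : ℝ, ξ₀ = ((k : ℝ) * ξ₂) ^ (-((k : ℝ) + 1)) →
      0 ≤ (k : ℝ) * ((k : ℝ) / 2) ^ (1 / ((k : ℝ) + 1)) * ξ₂ - ξ₂ ∧
      Real.exp (-1 / 2) / 2 * k * ξ₂ ≤
        Ffun ξ₀ ξ₂ k ((k : ℝ) * ((k : ℝ) / 2) ^ (1 / ((k : ℝ) + 1)) * ξ₂ - ξ₂) *
          Real.exp (ξ₀ * ξ₂ ^ ((k : ℝ) + 1) / ((k : ℝ) + 1)) := by
  intro ξ₀ hξ₀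
  have hk2 : (2 : ℝ) ≤ k := by exact_mod_cast hk
  set c : ℝ := ((k : ℝ) / 2) ^ (1 / ((k : ℝ) + 1))
  set X : ℝ := k * c * ξ₂ - ξ₂
  have hc : 1 ≤ c := Real.one_le_rpow (by linarith) (by positivity)
  have hkc : (k : ℝ) ≤ k * c := le_mul_of_one_le_right (by positivity) hc
  have hX : (k : ℝ) / 2 * ξ₂ ≤ X := by nlinarith [mul_le_mul_of_nonneg_right hkc h2.le]
  have hξ₀0 : 0 ≤ ξ₀ := by rw [hξ₀]; positivity
  have hX0 : 0 ≤ X := le_trans (by positivity) hX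
  have hend : ξ₀ * (X + ξ₂) ^ ((k : ℝ) + 1) = k / 2 := by
    rw [hξ₀, sub_add_cancel, mul_right_comm]
    exact Real.rpow_neg_mul_mul_rpow_one_div_rpow (by positivity) (by positivity) (by positivity)
  have hintegrand : Real.exp (-1 / 2) ≤ Real.exp (-ξ₀ * (X + ξ₂) ^ ((k : ℝ) + 1) / (k + 1)) := by
    rw [neg_mul, hend, Real.exp_le_exp, neg_div, neg_div, neg_le_neg_iff,
      div_le_div_iff₀ (by positivity) (by positivity)]
    linarith
  have hF := mul_exp_le_Ffun (p := k) hξ₀0 h2.le (by positivity) hX0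
  refine ⟨hX0, ?_⟩
  calc Real.exp (-1 / 2) / 2 * k * ξ₂ = Real.exp (-1 / 2) * (k / 2 * ξ₂) := by ring
    _ ≤ X * Real.exp (-ξ₀ * (X + ξ₂) ^ ((k : ℝ) + 1) / (k + 1)) := by
      rw [mul_comm X]; gcongr
    _ ≤ Ffun ξ₀ ξ₂ k X := hF
    _ ≤ Ffun ξ₀ ξ₂ k X * Real.exp (ξ₀ * ξ₂ ^ ((k : ℝ) + 1) / ((k : ℝ) + 1)) :=
      le_mul_of_one_le_right (le_trans (by positivity) hF)
        (Real.one_le_exp (by positivity))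
end
end

section
/- Logarithmic Gronwall estimate of Section 7.6. Let C > 0, k ≥ 1, t* > 0, and let y : [0,t*] → [0,∞) be differentiable with y(0) = y₀ and y′(t) ≤ C·( (e + y(t))·ln(e + y(t)) + k^{−2}·(e + y(t))·(ln(e + y(t)))² ) for all t ∈ [0,t*]. Set t₀ = (1/C)·ln(1 + k²/ln(e + y₀)). Then for every t ∈ [0,t*] with t < t₀ one has (1/ln(e + y₀) + 1/k²)·e^{−Ct} − 1/k² > 0 and 1/ln(e + y(t)) ≥ (1/ln(e + y₀) + 1/k²)·e^{−Ct} − 1/k²; in particular y(t) ≤ exp( ((1/ln(e + y₀) + 1/k²)·e^{−Ct} − 1/k²)^{−1} ) − e. -/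
/-!
With `w = -1 / ln(e + y)` the hypothesis becomes the linear differential inequality
`w' ≤ C (1/k² - w)`, so Grönwall gives `w t ≤ (w 0 - 1/k²) e^{-Ct} + 1/k²`, which is the
lower bound for `1 / ln(e + y t)`. The condition `t < t₀` says exactly that this lower bound
is positive, so it can be inverted and exponentiated.
-/

open Real Set

theorem le_gronwallBound_of_hasDerivWithinAt_Icc {f f' : ℝ → ℝ} {δ K ε a b : ℝ}
    (hf : ∀ x ∈ Icc a b, HasDerivWithinAt f (f' x) (Icc a b) x) (ha : f a ≤ δ)
    (bound : ∀ x ∈ Ico a b, f' x ≤ K * f x + ε) :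
    ∀ x ∈ Icc a b, f x ≤ gronwallBound δ K ε (x - a) :=
  le_gronwallBound_of_liminf_deriv_right_le (fun x hx => (hf x hx).continuousWithinAt)
    (fun x hx _ hr => ((hf x (Ico_subset_Icc_self hx)).mono_of_mem_nhdsWithin
      (Filter.mem_of_superset (Icc_mem_nhdsGE hx.2) (Icc_subset_Icc_left hx.1))
      ).liminf_right_slope_le hr)
    ha bound

theorem gronwallBound_neg_mul (δ C b x : ℝ) :
    gronwallBound δ (-C) (C * b) x = (δ - b) * exp (-C * x) + b := by
  rcases eq_or_ne C 0 with rfl | hC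
  · simp [gronwallBound_K0]
  · rw [gronwallBound_of_K_ne_0 (neg_ne_zero.mpr hC)]
    field_simp
    ring

theorem HasDerivWithinAt.neg_inv_log {u : ℝ → ℝ} {u' t : ℝ} {s : Set ℝ}
    (hu : HasDerivWithinAt u u' s t) (hu0 : u t ≠ 0) (hlog : Real.log (u t) ≠ 0) :
    HasDerivWithinAt (fun x => -(Real.log (u x))⁻¹) (u' / (u t * Real.log (u t) ^ 2)) s t :=
  ((hu.log hu0).inv hlog).neg.congr_deriv (by rw [neg_div, neg_neg, div_div])

/-- The hypothesis on `u = e + y`, `L = ln u` in the Grönwall form `w' ≤ K w + ε` for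
`w = -L⁻¹`, `K = -C`, `ε = C / k²`. -/
theorem div_mul_sq_le_of_le {C k u u' L : ℝ} (hu : 0 < u) (hL : 0 < L)
    (h : u' ≤ C * (u * L + u * L ^ 2 / k ^ 2)) :
    u' / (u * L ^ 2) ≤ -C * -L⁻¹ + C * (1 / k ^ 2) := by
  rw [div_le_iff₀ (by positivity)]
  refine h.trans_eq ?_
  field_simp

theorem sub_pos_of_lt_div_log {C p q t : ℝ} (hC : 0 < C) (hp : 0 < p) (hq : 0 < q)
    (ht : t < 1 / C * log (1 + q / p)) : 0 < (1 / p + 1 / q) * exp (-C * t) - 1 / q := by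
  have hexp : exp (C * t) < q * (1 / p + 1 / q) := by
    rw [← lt_log_iff_exp_lt (by positivity), ← lt_div_iff₀' hC]
    have hsum : q * (1 / p + 1 / q) = 1 + q / p := by field_simp; ring
    rw [hsum, div_eq_inv_mul, ← one_div]
    exact ht
  rw [sub_pos, neg_mul, exp_neg, ← div_eq_mul_inv, lt_div_iff₀ (exp_pos _)]
  calc 1 / q * exp (C * t) < 1 / q * (q * (1 / p + 1 / q)) := by gcongr
    _ = 1 / p + 1 / q := by field_simp

theorem le_exp_inv_of_le_inv_log {x R : ℝ} (hx : 0 < x) (hR : 0 < R) (h : R ≤ 1 / log x) :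
    x ≤ exp R⁻¹ := by
  have hlog : 0 < log x := one_div_pos.mp (hR.trans_le h)
  calc x = exp (log x) := (exp_log hx).symm
    _ ≤ exp R⁻¹ := by
      gcongr
      rwa [le_inv_comm₀ hlog hR, ← one_div]

theorem log_exp_one_add_pos {x : ℝ} (hx : 0 ≤ x) : 0 < log (exp 1 + x) :=
  log_pos (by linarith [add_one_lt_exp one_ne_zero])

theorem inv_log_exp_one_add_ge {C k T : ℝ} {y y' : ℝ → ℝ}
    (hnn : ∀ t ∈ Icc 0 T, 0 ≤ y t)
    (hdiff : ∀ t ∈ Icc 0 T, HasDerivWithinAt y (y' t) (Icc 0 T) t)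
    (hineq : ∀ t ∈ Icc 0 T, y' t ≤ C * ((exp 1 + y t) * log (exp 1 + y t) +
      (exp 1 + y t) * log (exp 1 + y t) ^ 2 / k ^ 2)) :
    ∀ t ∈ Icc 0 T, (1 / log (exp 1 + y 0) + 1 / k ^ 2) * exp (-C * t) - 1 / k ^ 2 ≤
      1 / log (exp 1 + y t) := by
  have hpos : ∀ t ∈ Icc 0 T, 0 < exp 1 + y t := fun t ht => by
    linarith [exp_pos 1, hnn t ht]
  have hlog : ∀ t ∈ Icc 0 T, 0 < log (exp 1 + y t) := fun t ht =>
    log_exp_one_add_pos (hnn t ht)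
  intro t ht
  have hw := le_gronwallBound_of_hasDerivWithinAt_Icc
    (f := fun t => -(log (exp 1 + y t))⁻¹) (δ := -(log (exp 1 + y 0))⁻¹)
    (K := -C) (ε := C * (1 / k ^ 2))
    (fun x hx => ((hdiff x hx).const_add _).neg_inv_log (hpos x hx).ne' (hlog x hx).ne')
    le_rfl
    (fun x hx => div_mul_sq_le_of_le (hpos x (Ico_subset_Icc_self hx))
      (hlog x (Ico_subset_Icc_self hx)) (hineq x (Ico_subset_Icc_self hx))) t ht
  rw [gronwallBound_neg_mul, sub_zero] at hw
  simp only [one_div] at hw ⊢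
  linarith

theorem stmt14_general (C k tstar y₀ : ℝ) (hC : 0 < C) (hk : 1 ≤ k)
    (y y' : ℝ → ℝ) (hy₀ : y 0 = y₀)
    (hnn : ∀ t ∈ Set.Icc 0 tstar, 0 ≤ y t)
    (hdiff : ∀ t ∈ Set.Icc 0 tstar, HasDerivWithinAt y (y' t) (Set.Icc 0 tstar) t)
    (hineq : ∀ t ∈ Set.Icc 0 tstar,
      y' t ≤ C * ((Real.exp 1 + y t) * Real.log (Real.exp 1 + y t) +
        (Real.exp 1 + y t) * Real.log (Real.exp 1 + y t) ^ 2 / k ^ 2)) :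
    ∀ t ∈ Set.Icc 0 tstar,
      t < 1 / C * Real.log (1 + k ^ 2 / Real.log (Real.exp 1 + y₀)) →
      0 < (1 / Real.log (Real.exp 1 + y₀) + 1 / k ^ 2) * Real.exp (-C * t) - 1 / k ^ 2 ∧
      (1 / Real.log (Real.exp 1 + y₀) + 1 / k ^ 2) * Real.exp (-C * t) - 1 / k ^ 2 ≤
        1 / Real.log (Real.exp 1 + y t) ∧
      y t ≤ Real.exp
          (((1 / Real.log (Real.exp 1 + y₀) + 1 / k ^ 2) * Real.exp (-C * t) - 1 / k ^ 2)⁻¹)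
        - Real.exp 1 := by
  subst hy₀
  intro t ht ht₀
  have hR := sub_pos_of_lt_div_log hC (log_exp_one_add_pos (hnn 0 ⟨le_rfl, ht.1.trans ht.2⟩))
    (pow_pos (by linarith) 2) ht₀
  have hbound := inv_log_exp_one_add_ge hnn hdiff hineq t ht
  refine ⟨hR, hbound, le_sub_iff_add_le'.mpr ?_⟩
  exact le_exp_inv_of_le_inv_log (by linarith [exp_pos 1, hnn t ht]) hR hbound

/-- **Logarithmic Gronwall estimate of Section 7.6.** If `y : [0,t*] → [0,∞)` is
differentiable, `y(0) = y₀`, and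
`y′ ≤ C·((e+y)·ln(e+y) + k⁻²·(e+y)·ln(e+y)²)`, then setting
`t₀ = (1/C)·ln(1 + k²/ln(e+y₀))`, for every `t ∈ [0,t*]` with `t < t₀` one has
`(1/ln(e+y₀) + 1/k²)·e^{−Ct} − 1/k² > 0`,
`1/ln(e+y(t)) ≥ (1/ln(e+y₀) + 1/k²)·e^{−Ct} − 1/k²`, and in particular
`y(t) ≤ exp(((1/ln(e+y₀) + 1/k²)·e^{−Ct} − 1/k²)⁻¹) − e`. -/
theorem stmt14 (C k tstar y₀ : ℝ) (hC : 0 < C) (hk : 1 ≤ k) (htstar : 0 < tstar)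
    (y y' : ℝ → ℝ) (hy₀ : y 0 = y₀)
    (hnn : ∀ t ∈ Set.Icc 0 tstar, 0 ≤ y t)
    (hdiff : ∀ t ∈ Set.Icc 0 tstar, HasDerivWithinAt y (y' t) (Set.Icc 0 tstar) t)
    (hineq : ∀ t ∈ Set.Icc 0 tstar,
      y' t ≤ C * ((Real.exp 1 + y t) * Real.log (Real.exp 1 + y t) +
        (Real.exp 1 + y t) * Real.log (Real.exp 1 + y t) ^ 2 / k ^ 2)) :
    ∀ t ∈ Set.Icc 0 tstar,
      t < 1 / C * Real.log (1 + k ^ 2 / Real.log (Real.exp 1 + y₀)) →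
      0 < (1 / Real.log (Real.exp 1 + y₀) + 1 / k ^ 2) * Real.exp (-C * t) - 1 / k ^ 2 ∧
      (1 / Real.log (Real.exp 1 + y₀) + 1 / k ^ 2) * Real.exp (-C * t) - 1 / k ^ 2 ≤
        1 / Real.log (Real.exp 1 + y t) ∧
      y t ≤ Real.exp
          (((1 / Real.log (Real.exp 1 + y₀) + 1 / k ^ 2) * Real.exp (-C * t) - 1 / k ^ 2)⁻¹)
        - Real.exp 1 :=
  stmt14_general C k tstar y₀ hC hk y y' hy₀ hnn hdiff hineq
end
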